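/- Let W ∈ ℝ^{n×n} be doubly stochastic and suppose ‖Wv‖ ≤ ε·‖v‖ for every v ∈ ℂ^n orthogonal to the all-ones vector. Let J be the n×n matrix with every entry 1/n. Then the 2n×2n block matrix with blocks [[0, 0], [W, 0]] is a unit-circle ε-approximation of the 2n×2n block matrix with blocks [[0, 0], [J, 0]]. -/

import Mathlib

/-!
Only the lower-left block of the error matrix is seen: `x*(J − W)y = x₂*(J − W)y₁`. Since
`W` fixes constants and preserves coordinate sums, this equals `−x₂'* W y₁'`, where `'`
removes the mean, so the expansion hypothesis bounds it by
`ε‖x₂'‖‖y₁'‖ ≤ ε/2 (‖x₂'‖² + ‖y₁'‖²)`. On the other side, `x*Jx = conj(Σx₂)(Σx₁)/n`,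
which by AM-GM is absorbed by the mean components `|Σx₁|²/n + |Σx₂|²/n` of `‖x‖²`,
leaving at least the centered parts.
-/

open Matrix

noncomputable section

/-- The sesquilinear form `x* A y`. -/
def sesq {m : Type*} [Fintype m] (A : Matrix m m ℂ) (x y : m → ℂ) : ℂ :=
  star x ⬝ᵥ (A *ᵥ y)

/-- The squared Euclidean norm of a complex vector. -/
def vnormSq {m : Type*} [Fintype m] (x : m → ℂ) : ℝ :=
  ∑ i, Complex.normSq (x i)

/-- `W̃` is a *unit-circle ε-approximation* of `W`. -/
def UnitCircleApprox {m : Type*} [Fintype m] (ε : ℝ) (W Wt : Matrix m m ℂ) : Prop :=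
  ∀ x y : m → ℂ,
    ‖sesq (W - Wt) x y‖ ≤
      ε / 2 * (vnormSq x + vnormSq y - ‖sesq W x x + sesq W y y‖)

section Vectors

variable {ι : Type*} [Fintype ι]

lemma vnormSq_eq_sum_norm_sq (x : ι → ℂ) : vnormSq x = ∑ i, ‖x i‖ ^ 2 := by
  simp only [vnormSq, Complex.sq_norm]

lemma vnormSq_nonneg (x : ι → ℂ) : 0 ≤ vnormSq x :=
  Finset.sum_nonneg fun i _ => Complex.normSq_nonneg (x i)

lemma norm_star_dotProduct_le (w u : ι → ℂ) :
    ‖star w ⬝ᵥ u‖ ≤ √(vnormSq w) * √(vnormSq u) := by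
  rw [vnormSq_eq_sum_norm_sq, vnormSq_eq_sum_norm_sq]
  calc ‖star w ⬝ᵥ u‖ ≤ ∑ i, ‖w i‖ * ‖u i‖ := by
        simpa [dotProduct] using norm_sum_le Finset.univ fun i => star (w i) * u i
    _ ≤ _ := Real.sum_mul_le_sqrt_mul_sqrt _ _ _

def centered (z : ι → ℂ) : ι → ℂ :=
  z - Function.const ι ((∑ i, z i) / Fintype.card ι)

lemma sum_centered (z : ι → ℂ) : ∑ i, centered z i = 0 := by
  rcases isEmpty_or_nonempty ι with hι | hι
  · simp
  · have hcard : (Fintype.card ι : ℂ) ≠ 0 := Nat.cast_ne_zero.mpr Fintype.card_ne_zero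
    simp [centered, Finset.sum_sub_distrib, mul_div_cancel₀ _ hcard]

lemma vnormSq_add_const_of_sum_eq_zero {a : ι → ℂ} (ha : ∑ i, a i = 0) (c : ℂ) :
    vnormSq (a + Function.const ι c) = vnormSq a + Fintype.card ι * ‖c‖ ^ 2 := by
  have hcross : ∑ i, (a i * (starRingEnd ℂ) c).re = 0 := by
    rw [← Complex.re_sum, ← Finset.sum_mul, ha, zero_mul, Complex.zero_re]
  simp only [vnormSq, Pi.add_apply, Function.const_apply, Complex.normSq_add,
    Finset.sum_add_distrib, ← Finset.mul_sum, hcross, Finset.sum_const, Finset.card_univ,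
    nsmul_eq_mul, Complex.sq_norm]
  ring

lemma vnormSq_eq_vnormSq_centered_add (z : ι → ℂ) :
    vnormSq z = vnormSq (centered z) + ‖∑ i, z i‖ ^ 2 / Fintype.card ι := by
  have hz : z = centered z + Function.const ι ((∑ i, z i) / Fintype.card ι) := by
    rw [centered, sub_add_cancel]
  conv_lhs => rw [hz]
  rw [vnormSq_add_const_of_sum_eq_zero (sum_centered z), norm_div, Complex.norm_natCast]
  rcases eq_or_ne (Fintype.card ι : ℝ) 0 with h | h
  · simp [h]
  · field_simp

lemma norm_sum_sq_div_card_le_vnormSq (z : ι → ℂ) :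
    ‖∑ i, z i‖ ^ 2 / Fintype.card ι ≤ vnormSq z := by
  rw [vnormSq_eq_vnormSq_centered_add z]
  linarith [vnormSq_nonneg (centered z)]

lemma star_centered_dotProduct {u : ι → ℂ} (hu : ∑ i, u i = 0) (z : ι → ℂ) :
    star (centered z) ⬝ᵥ u = star z ⬝ᵥ u := by
  have hconst (c : ℂ) : star (Function.const ι c) ⬝ᵥ u = 0 := by
    simp [dotProduct, ← Finset.mul_sum, hu]
  rw [centered, star_sub, sub_dotProduct, hconst, sub_zero]

end Vectors

section StochasticMatrices

variable {ι α : Type*} [Fintype ι] [NonAssocSemiring α] {M : Matrix ι ι α}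

lemma mulVec_const_of_sum_row_eq_one (hrow : ∀ i, ∑ j, M i j = 1) (c : α) :
    M *ᵥ Function.const ι c = Function.const ι c := by
  funext i
  simp [mulVec, dotProduct, ← Finset.sum_mul, hrow]

lemma sum_mulVec_of_sum_col_eq_one (hcol : ∀ j, ∑ i, M i j = 1) (u : ι → α) :
    ∑ i, (M *ᵥ u) i = ∑ i, u i := by
  simp only [mulVec, dotProduct]
  rw [Finset.sum_comm]
  simp [← Finset.sum_mul, hcol]

end StochasticMatrices

section MeanMatrix

variable {ι : Type*} [Fintype ι]

variable (ι) in
/-- The matrix `J` of the statement, over an arbitrary finite index type. -/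
def meanMatrix : Matrix ι ι ℂ :=
  of fun _ _ => 1 / (Fintype.card ι : ℂ)

lemma meanMatrix_fin (n : ℕ) : meanMatrix (Fin n) = of fun _ _ => 1 / (n : ℂ) := by
  rw [meanMatrix, Fintype.card_fin]

lemma meanMatrix_mulVec (v : ι → ℂ) :
    meanMatrix ι *ᵥ v = Function.const ι ((∑ i, v i) / Fintype.card ι) := by
  funext i
  simp [meanMatrix, mulVec, dotProduct, div_eq_inv_mul, Finset.mul_sum]

lemma star_dotProduct_meanMatrix_mulVec (u v : ι → ℂ) :
    star u ⬝ᵥ (meanMatrix ι *ᵥ v) = star (∑ i, u i) * (∑ i, v i) / Fintype.card ι := by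
  simp [meanMatrix_mulVec, dotProduct, ← Finset.sum_mul, mul_div_assoc]

lemma star_dotProduct_meanMatrix_sub_mulVec {M : Matrix ι ι ℂ}
    (hrow : ∀ i, ∑ j, M i j = 1) (hcol : ∀ j, ∑ i, M i j = 1) (x y : ι → ℂ) :
    star x ⬝ᵥ ((meanMatrix ι - M) *ᵥ y) = -(star (centered x) ⬝ᵥ (M *ᵥ centered y)) := by
  have hJM : (meanMatrix ι - M) *ᵥ y = -(M *ᵥ centered y) := by
    rw [sub_mulVec, meanMatrix_mulVec, ← mulVec_const_of_sum_row_eq_one hrow, centered,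
      mulVec_sub, neg_sub]
  rw [hJM, dotProduct_neg,
    star_centered_dotProduct (by rw [sum_mulVec_of_sum_col_eq_one hcol, sum_centered])]

lemma norm_star_dotProduct_mulVec_le {M : Matrix ι ι ℂ} {ε : ℝ} (hε : 0 ≤ ε)
    (hexp : ∀ v : ι → ℂ, ∑ i, v i = 0 → √(vnormSq (M *ᵥ v)) ≤ ε * √(vnormSq v))
    (w : ι → ℂ) {v : ι → ℂ} (hv : ∑ i, v i = 0) :
    ‖star w ⬝ᵥ (M *ᵥ v)‖ ≤ ε / 2 * (vnormSq w + vnormSq v) := by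
  have amgm : 2 * (√(vnormSq w) * √(vnormSq v)) ≤ vnormSq w + vnormSq v := by
    nlinarith [two_mul_le_add_sq √(vnormSq w) √(vnormSq v),
      Real.sq_sqrt (vnormSq_nonneg w), Real.sq_sqrt (vnormSq_nonneg v)]
  calc ‖star w ⬝ᵥ (M *ᵥ v)‖ ≤ √(vnormSq w) * √(vnormSq (M *ᵥ v)) :=
        norm_star_dotProduct_le w _
    _ ≤ √(vnormSq w) * (ε * √(vnormSq v)) := by gcongr; exact hexp v hv
    _ ≤ ε / 2 * (vnormSq w + vnormSq v) := by nlinarith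

end MeanMatrix

section Blocks

variable {ι κ : Type*} [Fintype ι] [Fintype κ]

lemma sesq_sub (A B : Matrix ι ι ℂ) (x y : ι → ℂ) :
    sesq (A - B) x y = sesq A x y - sesq B x y := by
  simp only [sesq, sub_mulVec, dotProduct_sub]

lemma sesq_fromBlocks_zero (M : Matrix κ ι ℂ) (x y : ι ⊕ κ → ℂ) :
    sesq (fromBlocks 0 0 M 0) x y = star (x ∘ Sum.inr) ⬝ᵥ (M *ᵥ (y ∘ Sum.inl)) := by
  simp [sesq, dotProduct, mulVec, fromBlocks, Fintype.sum_sum_type, Function.comp_def]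

lemma vnormSq_sum_type (x : ι ⊕ κ → ℂ) :
    vnormSq x = vnormSq (x ∘ Sum.inl) + vnormSq (x ∘ Sum.inr) :=
  Fintype.sum_sum_type _

lemma norm_sesq_fromBlocks_meanMatrix_add_le (x : ι ⊕ ι → ℂ) :
    ‖sesq (fromBlocks 0 0 (meanMatrix ι) 0) x x‖ + vnormSq (centered (x ∘ Sum.inl))
      + vnormSq (centered (x ∘ Sum.inr)) ≤ vnormSq x := by
  set a := ∑ i, (x ∘ Sum.inl) i
  set b := ∑ i, (x ∘ Sum.inr) i
  have hab : ‖b‖ * ‖a‖ / Fintype.card ι ≤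
      ‖a‖ ^ 2 / Fintype.card ι + ‖b‖ ^ 2 / Fintype.card ι := by
    rw [← add_div]
    gcongr
    nlinarith [sq_nonneg (‖a‖ - ‖b‖), norm_nonneg a, norm_nonneg b]
  rw [sesq_fromBlocks_zero, star_dotProduct_meanMatrix_mulVec, vnormSq_sum_type,
    vnormSq_eq_vnormSq_centered_add (x ∘ Sum.inl),
    vnormSq_eq_vnormSq_centered_add (x ∘ Sum.inr)]
  simp only [norm_div, norm_mul, norm_star, Complex.norm_natCast]
  linarith

end Blocks

theorem bipartite_expander_unitCircle_approx_general {n : ℕ} (ε : ℝ) (hε : 0 ≤ ε)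
    (W : Matrix (Fin n) (Fin n) ℝ)
    (hrow : ∀ i, ∑ j, W i j = 1) (hcol : ∀ j, ∑ i, W i j = 1)
    (hexp : ∀ v : Fin n → ℂ, (∑ i, v i) = 0 →
      Real.sqrt (vnormSq ((W.map Complex.ofReal) *ᵥ v)) ≤ ε * Real.sqrt (vnormSq v)) :
    UnitCircleApprox ε
      (Matrix.fromBlocks 0 0 (Matrix.of fun (_ _ : Fin n) => (1 / (n : ℂ))) 0)
      (Matrix.fromBlocks 0 0 (W.map Complex.ofReal) 0) := by
  set M := W.map Complex.ofReal
  have hrowM : ∀ i, ∑ j, M i j = 1 := fun i => by simp [M, ← Complex.ofReal_sum, hrow]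
  have hcolM : ∀ j, ∑ i, M i j = 1 := fun j => by simp [M, ← Complex.ofReal_sum, hcol]
  rw [← meanMatrix_fin]
  intro x y
  rw [sesq_sub, sesq_fromBlocks_zero, sesq_fromBlocks_zero, ← dotProduct_sub, ← sub_mulVec,
    star_dotProduct_meanMatrix_sub_mulVec hrowM hcolM, norm_neg]
  set J := fromBlocks 0 0 (meanMatrix (Fin n)) 0
  calc _ ≤ ε / 2 * (vnormSq (centered (x ∘ Sum.inr)) + vnormSq (centered (y ∘ Sum.inl))) :=
        norm_star_dotProduct_mulVec_le hε hexp _ (sum_centered _)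
    _ ≤ ε / 2 * (vnormSq x + vnormSq y - ‖sesq J x x + sesq J y y‖) := by
        gcongr
        linarith [norm_add_le (sesq J x x) (sesq J y y),
          norm_sesq_fromBlocks_meanMatrix_add_le x, norm_sesq_fromBlocks_meanMatrix_add_le y,
          vnormSq_nonneg (centered (x ∘ Sum.inl)), vnormSq_nonneg (centered (y ∘ Sum.inr))]

/-- If `W` is doubly stochastic with `‖Wv‖ ≤ ε‖v‖` for all
`v ⊥ 1`, then the block matrix `[[0,0],[W,0]]` is a unit-circle ε-approximation
of `[[0,0],[J,0]]`, where `J` has every entry `1/n`. -/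
theorem bipartite_expander_unitCircle_approx {n : ℕ} (ε : ℝ) (hε : 0 ≤ ε)
    (W : Matrix (Fin n) (Fin n) ℝ)
    (hnn : ∀ i j, 0 ≤ W i j) (hrow : ∀ i, ∑ j, W i j = 1) (hcol : ∀ j, ∑ i, W i j = 1)
    (hexp : ∀ v : Fin n → ℂ, (∑ i, v i) = 0 →
      Real.sqrt (vnormSq ((W.map Complex.ofReal) *ᵥ v)) ≤ ε * Real.sqrt (vnormSq v)) :
    UnitCircleApprox ε
      (Matrix.fromBlocks 0 0 (Matrix.of fun (_ _ : Fin n) => (1 / (n : ℂ))) 0)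
      (Matrix.fromBlocks 0 0 (W.map Complex.ofReal) 0) :=
  bipartite_expander_unitCircle_approx_general ε hε W hrow hcol hexp

end
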